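/- Let H be a Hermitian matrix with eigenvalues E_max and E_min as extremes, and suppose ⟨ψ|exp(−iHt/ℏ)|ψ⟩ = 0 for some unit vector ψ with |E_j t/ℏ| ≤ π/2 for all eigenvalues E_j. Then t ≥ πℏ/(E_max − E_min), with equality achievable by an equal superposition of the extreme-energy eigenvectors. -/

import Mathlib

open Matrix

noncomputable section

/-! In the eigenbasis of `H`, `⟨ψ|exp(-iHs)|ψ⟩ = ∑ⱼ pⱼ exp(-i Eⱼ s)` with weights `pⱼ ≥ 0` summing
to `1`. When every phase `Eⱼ s` lies in `[-π/2, π/2]`, all cosines are nonnegative, so the real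
part vanishes only if every occupied level has `Eⱼ s = ±π/2`; the imaginary part then forces both
signs to occur, so two eigenvalues differ by `π / s`. Conversely, the equal superposition of the
extreme eigenvectors evolves to a multiple of `1 + exp(-iπ) = 0` at `s = π / (E_max - E_min)`. -/

namespace Real

theorem eq_pi_div_two_or_eq_neg_of_cos_eq_zero {θ : ℝ} (hθ : |θ| ≤ π / 2) (h : cos θ = 0) :
    θ = π / 2 ∨ θ = -(π / 2) := by
  refine (abs_eq pi_div_two_pos.le).1 (hθ.antisymm (not_lt.1 fun hlt => ?_))
  exact (cos_pos_of_mem_Ioo (abs_lt.1 hlt)).ne' h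

variable {ι : Type*} [Fintype ι] {p θ : ι → ℝ}

/-- Where `p` is positive, `cos θ = 0`; if `θ = π / 2` there, the `sin`-average would be `1`. -/
theorem exists_eq_neg_pi_div_two_of_sum_mul_cos_eq_zero (hp : ∀ j, 0 ≤ p j)
    (hp1 : ∑ j, p j = 1) (hθ : ∀ j, |θ j| ≤ π / 2) (hcos : ∑ j, p j * cos (θ j) = 0)
    (hsin : ∑ j, p j * sin (θ j) = 0) : ∃ k, θ k = -(π / 2) := by
  have hcos_nonneg : ∀ j, 0 ≤ cos (θ j) := fun j => cos_nonneg_of_neg_pi_div_two_le_of_le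
    (abs_le.1 (hθ j)).1 (abs_le.1 (hθ j)).2
  have hterm := (Finset.sum_eq_zero_iff_of_nonneg fun j _ =>
    mul_nonneg (hp j) (hcos_nonneg j)).1 hcos
  by_contra! hne
  have hsin_term : ∀ j, p j * sin (θ j) = p j := by
    intro j
    rcases (hp j).eq_or_lt with h0 | hpos
    · simp [← h0]
    · have hcos0 : cos (θ j) = 0 :=
        (mul_eq_zero.1 (hterm j (Finset.mem_univ j))).resolve_left hpos.ne'
      rw [(eq_pi_div_two_or_eq_neg_of_cos_eq_zero (hθ j) hcos0).resolve_right (hne j),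
        sin_pi_div_two, mul_one]
  simp [hsin_term, hp1] at hsin

theorem exists_eq_pi_div_two_and_eq_neg_of_sum_mul_exp_eq_zero (hp : ∀ j, 0 ≤ p j)
    (hp1 : ∑ j, p j = 1) (hθ : ∀ j, |θ j| ≤ π / 2)
    (h : ∑ j, (p j : ℂ) * Complex.exp (θ j * Complex.I) = 0) :
    (∃ j, θ j = π / 2) ∧ ∃ k, θ k = -(π / 2) := by
  have hcos : ∑ j, p j * cos (θ j) = 0 := by
    simpa [Complex.re_sum, Complex.re_ofReal_mul, Complex.exp_ofReal_mul_I_re] using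
      congrArg Complex.re h
  have hsin : ∑ j, p j * sin (θ j) = 0 := by
    simpa [Complex.im_sum, Complex.im_ofReal_mul, Complex.exp_ofReal_mul_I_im] using
      congrArg Complex.im h
  refine ⟨?_, exists_eq_neg_pi_div_two_of_sum_mul_cos_eq_zero hp hp1 hθ hcos hsin⟩
  obtain ⟨j, hj⟩ := exists_eq_neg_pi_div_two_of_sum_mul_cos_eq_zero (θ := fun j => -θ j) hp hp1
    (by simpa using hθ) (by simpa using hcos) (by simpa using hsin)
  exact ⟨j, neg_inj.1 hj⟩

end Real

namespace Matrix.IsHermitian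

variable {ι : Type*} [Fintype ι] [DecidableEq ι] {H : Matrix ι ι ℂ} (hH : H.IsHermitian)

/-- The probability `|⟨eⱼ|ψ⟩|²` of measuring the energy `hH.eigenvalues j` in the state `ψ`. -/
def spectralWeight (ψ : ι → ℂ) (j : ι) : ℝ :=
  Complex.normSq ((star (hH.eigenvectorUnitary : Matrix ι ι ℂ) *ᵥ ψ) j)

theorem exp_smul_eq (c : ℂ) :
    NormedSpace.exp (c • H) = (hH.eigenvectorUnitary : Matrix ι ι ℂ) *
      diagonal (fun j => Complex.exp (c * hH.eigenvalues j)) *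
        star (hH.eigenvectorUnitary : Matrix ι ι ℂ) := by
  set u := Unitary.toUnits hH.eigenvectorUnitary
  have hconj :
      c • H = u * diagonal (fun j => c * (hH.eigenvalues j : ℂ)) * (↑u⁻¹ : Matrix ι ι ℂ) := by
    conv_lhs => rw [hH.spectral_theorem, Unitary.conjStarAlgAut_apply]
    simp only [u, Unitary.val_toUnits_apply, Unitary.val_inv_toUnits_apply, Function.comp_def]
    rw [← Matrix.smul_mul, ← Matrix.mul_smul, ← diagonal_smul]
    rfl
  rw [hconj, Matrix.exp_units_conj, Matrix.exp_diagonal, Pi.exp_def]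
  simp [u, ← Complex.exp_eq_exp_ℂ]

theorem dotProduct_exp_smul_mulVec (c : ℂ) (ψ : ι → ℂ) :
    star ψ ⬝ᵥ NormedSpace.exp (c • H) *ᵥ ψ =
      ∑ j, (hH.spectralWeight ψ j : ℂ) * Complex.exp (c * hH.eigenvalues j) := by
  set U : Matrix ι ι ℂ := (hH.eigenvectorUnitary : Matrix ι ι ℂ)
  have hstar : star ψ ᵥ* U = star (star U *ᵥ ψ) := by
    rw [star_mulVec, star_eq_conjTranspose, conjTranspose_conjTranspose]
  rw [hH.exp_smul_eq, ← mulVec_mulVec, ← mulVec_mulVec, dotProduct_mulVec, hstar]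
  simp only [mulVec_diagonal, dotProduct, spectralWeight, Complex.normSq_eq_conj_mul_self]
  refine Finset.sum_congr rfl fun j _ => ?_
  simp only [Pi.star_apply, RCLike.star_def]
  ring

theorem sum_spectralWeight (ψ : ι → ℂ) :
    ∑ j, (hH.spectralWeight ψ j : ℂ) = star ψ ⬝ᵥ ψ := by
  simpa using (hH.dotProduct_exp_smul_mulVec 0 ψ).symm

theorem spectralWeight_mulVec_eigenvectorUnitary (φ : ι → ℂ) (j : ι) :
    hH.spectralWeight ((hH.eigenvectorUnitary : Matrix ι ι ℂ) *ᵥ φ) j = Complex.normSq (φ j) := by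
  rw [spectralWeight, mulVec_mulVec, Unitary.coe_star_mul_self, one_mulVec]

theorem exists_dotProduct_exp_smul_mulVec_eq_midpoint {i k : ι} (hik : i ≠ k) :
    ∃ ψ : ι → ℂ, star ψ ⬝ᵥ ψ = 1 ∧ ∀ c : ℂ, star ψ ⬝ᵥ NormedSpace.exp (c • H) *ᵥ ψ =
      (Complex.exp (c * hH.eigenvalues i) + Complex.exp (c * hH.eigenvalues k)) / 2 := by
  set a : ℂ := (((√2)⁻¹ : ℝ) : ℂ)
  set φ : ι → ℂ := Pi.single i a + Pi.single k a
  have ha : Complex.normSq a = 1 / 2 := by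
    rw [Complex.normSq_ofReal, ← mul_inv, Real.mul_self_sqrt zero_le_two, one_div]
  set ψ := (hH.eigenvectorUnitary : Matrix ι ι ℂ) *ᵥ φ
  have key : ∀ c : ℂ, star ψ ⬝ᵥ NormedSpace.exp (c • H) *ᵥ ψ =
      (Complex.exp (c * hH.eigenvalues i) + Complex.exp (c * hH.eigenvalues k)) / 2 := by
    intro c
    rw [hH.dotProduct_exp_smul_mulVec, Fintype.sum_eq_add i k hik]
    · simp only [ψ, spectralWeight_mulVec_eigenvectorUnitary, φ, Pi.add_apply,
        Pi.single_eq_same, Pi.single_eq_of_ne hik, Pi.single_eq_of_ne hik.symm, add_zero,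
        zero_add, ha]
      push_cast
      ring
    · rintro x ⟨hxi, hxk⟩
      simp [ψ, spectralWeight_mulVec_eigenvectorUnitary, φ, hxi, hxk]
  refine ⟨ψ, by simpa using key 0, key⟩

theorem exists_sub_mul_eq_pi_of_dotProduct_exp_mulVec_eq_zero {s : ℝ}
    (hs : ∀ j, |hH.eigenvalues j * s| ≤ Real.pi / 2) {ψ : ι → ℂ} (hψ : star ψ ⬝ᵥ ψ = 1)
    (horth : star ψ ⬝ᵥ NormedSpace.exp ((-(Complex.I * s)) • H) *ᵥ ψ = 0) :
    ∃ j k, (hH.eigenvalues j - hH.eigenvalues k) * s = Real.pi := by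
  have hp1 : ∑ j, hH.spectralWeight ψ j = 1 := by
    exact_mod_cast (hH.sum_spectralWeight ψ).trans hψ
  have hsum : ∑ j, (hH.spectralWeight ψ j : ℂ) *
      Complex.exp ((-(hH.eigenvalues j * s) : ℝ) * Complex.I) = 0 := by
    rw [← horth, hH.dotProduct_exp_smul_mulVec]
    refine Finset.sum_congr rfl fun j _ => ?_
    push_cast
    ring_nf
  obtain ⟨⟨k, hk⟩, j, hj⟩ := Real.exists_eq_pi_div_two_and_eq_neg_of_sum_mul_exp_eq_zero
    (fun j => Complex.normSq_nonneg _) hp1 (fun j => (abs_neg _).trans_le (hs j)) hsum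
  exact ⟨j, k, by linarith⟩

end Matrix.IsHermitian

theorem Complex.exp_mul_add_exp_mul_eq_zero {s a b : ℝ} (h : s * (a - b) = Real.pi) :
    exp (-(I * s) * a) + exp (-(I * s) * b) = 0 := by
  have : -(I * s) * a = -(I * s) * b - Real.pi * I := by
    rw [← h]
    push_cast
    ring
  rw [this, exp_sub_pi_mul_I, neg_add_cancel]

theorem min_orthogonalization_time_general {n : ℕ}
    (H : Matrix (Fin n) (Fin n) ℂ) (hH : H.IsHermitian) (ℏ : ℝ) (hℏ : 0 < ℏ) :
    (∀ t : ℝ, 0 < t →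
      (∀ j, |hH.eigenvalues j * t / ℏ| ≤ Real.pi / 2) →
      ∀ ψ : Fin n → ℂ, star ψ ⬝ᵥ ψ = 1 →
        star ψ ⬝ᵥ (NormedSpace.exp ((-(Complex.I * (t / ℏ : ℝ))) • H)).mulVec ψ = 0 →
        t ≥ Real.pi * ℏ / ((⨆ j, hH.eigenvalues j) - ⨅ j, hH.eigenvalues j)) ∧
    ((⨅ j, hH.eigenvalues j) < (⨆ j, hH.eigenvalues j) →
      ∃ ψ : Fin n → ℂ, star ψ ⬝ᵥ ψ = 1 ∧
        star ψ ⬝ᵥ (NormedSpace.exp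
          ((-(Complex.I * ((Real.pi * ℏ / ((⨆ j, hH.eigenvalues j) - ⨅ j, hH.eigenvalues j)) / ℏ : ℝ))) • H)).mulVec ψ = 0) := by
  set E := hH.eigenvalues
  constructor
  · intro t ht hb ψ hψ horth
    obtain ⟨j, k, hjk⟩ := hH.exists_sub_mul_eq_pi_of_dotProduct_exp_mulVec_eq_zero
      (fun j => by simpa only [mul_div_assoc] using hb j) hψ horth
    have hj : E j ≤ ⨆ i, E i := le_ciSup (Set.finite_range E).bddAbove j
    have hk : ⨅ i, E i ≤ E k := ciInf_le (Set.finite_range E).bddBelow k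
    have hjk' : (E j - E k) * t = Real.pi * ℏ := by
      field_simp at hjk
      linarith
    have hgap : 0 < (⨆ i, E i) - ⨅ i, E i := by nlinarith [Real.pi_pos]
    rw [ge_iff_le, div_le_iff₀ hgap]
    nlinarith
  · intro hlt
    have : Nonempty (Fin n) := by
      by_contra hempty
      simp [not_nonempty_iff.1 hempty] at hlt
    obtain ⟨jmax, hjmax⟩ := exists_eq_ciSup_of_finite (f := E)
    obtain ⟨jmin, hjmin⟩ := exists_eq_ciInf_of_finite (f := E)
    have hne : jmax ≠ jmin := fun h => hlt.ne (by rw [← hjmax, ← hjmin, h])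
    obtain ⟨ψ, hψ, hexp⟩ := hH.exists_dotProduct_exp_smul_mulVec_eq_midpoint hne
    refine ⟨ψ, hψ, (hexp _).trans ?_⟩
    rw [div_eq_zero_iff, Complex.exp_mul_add_exp_mul_eq_zero]
    · exact .inl rfl
    · change _ * (E jmax - E jmin) = _
      rw [hjmax, hjmin]
      field_simp [(sub_pos.2 hlt).ne']

/-- minimum orthogonalization time: for `H` Hermitian with
extreme eigen-energies `E_max`, `E_min`, any unit vector `ψ` with
`⟨ψ|exp(−iHt/ℏ)|ψ⟩ = 0` and `|E_j t/ℏ| ≤ π/2` for all `j` satisfies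
`t ≥ πℏ/(E_max − E_min)`; equality is achievable (by an equal superposition of
the extreme-energy eigenvectors) when `E_min < E_max`. -/
theorem min_orthogonalization_time {n : ℕ} (hn : 0 < n)
    (H : Matrix (Fin n) (Fin n) ℂ) (hH : H.IsHermitian) (ℏ : ℝ) (hℏ : 0 < ℏ) :
    (∀ t : ℝ, 0 < t →
      (∀ j, |hH.eigenvalues j * t / ℏ| ≤ Real.pi / 2) →
      ∀ ψ : Fin n → ℂ, star ψ ⬝ᵥ ψ = 1 →
        star ψ ⬝ᵥ (NormedSpace.exp ((-(Complex.I * (t / ℏ : ℝ))) • H)).mulVec ψ = 0 →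
        t ≥ Real.pi * ℏ / ((⨆ j, hH.eigenvalues j) - ⨅ j, hH.eigenvalues j)) ∧
    ((⨅ j, hH.eigenvalues j) < (⨆ j, hH.eigenvalues j) →
      ∃ ψ : Fin n → ℂ, star ψ ⬝ᵥ ψ = 1 ∧
        star ψ ⬝ᵥ (NormedSpace.exp
          ((-(Complex.I * ((Real.pi * ℏ / ((⨆ j, hH.eigenvalues j) - ⨅ j, hH.eigenvalues j)) / ℏ : ℝ))) • H)).mulVec ψ = 0) :=
  min_orthogonalization_time_general H hH ℏ hℏ
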